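/- Let C be a cycle of even length at least 6 in a complete r-partite graph G. If C has no odd chord, then every even chord of C exists in G (i.e., any two vertices of C at even distance along C are adjacent in G). -/

import Mathlib

variable {V : Type*} [Fintype V] [DecidableEq V]

/-- `M` is a perfect matching of `G`: every edge of `M` is an edge of `G`,
and every vertex lies in exactly one edge of `M`. -/
def IsPM (G : SimpleGraph V) (M : Finset (Sym2 V)) : Prop :=
  (∀ e ∈ M, e ∈ G.edgeSet) ∧ ∀ v : V, ∃! e, e ∈ M ∧ v ∈ e

/-- The `M`-induced weight of an edge, for the coloring `c` (`true` = red):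
`-1` for red matching edges, `+1` for red non-matching edges, `0` for blue edges. -/
def wt (c : Sym2 V → Bool) (M : Finset (Sym2 V)) (e : Sym2 V) : ℤ :=
  if c e then (if e ∈ M then -1 else 1) else 0

/-- Number of red edges of a finite edge set. -/
def redCount (c : Sym2 V → Bool) (F : Finset (Sym2 V)) : ℕ :=
  (F.filter (fun e => c e = true)).card

/-- A walk is `M`-alternating if consecutive edges have opposite membership in `M`. -/
def IsAlt (M : Finset (Sym2 V)) {G : SimpleGraph V} {u v : V} (P : G.Walk u v) : Prop :=
  P.edges.Chain' (fun e f => (e ∈ M) ↔ f ∉ M)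

/-- The `i`-th vertex (cyclically, indices mod `C.length`) along a closed walk `C`. -/
def cvtx {G : SimpleGraph V} {v : V} (C : G.Walk v v) (i : ℕ) : V :=
  C.support.tail.getD (i % C.length) v

/-- Positions `i, j` on the cycle `C` carry a chord: the corresponding vertices are
adjacent in `G` but the edge is not an edge of `C`. -/
def IsChordAt {G : SimpleGraph V} {v : V} (C : G.Walk v v) (i j : ℕ) : Prop :=
  G.Adj (cvtx C i) (cvtx C j) ∧ s(cvtx C i, cvtx C j) ∉ C.edges

/-- `C` has an odd chord: a chord splitting `C` into two odd-length paths. -/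
def HasOddChord {G : SimpleGraph V} {v : V} (C : G.Walk v v) : Prop :=
  ∃ i j : ℕ, i < j ∧ j < C.length ∧ Odd (j - i) ∧ IsChordAt C i j

/-- `C` has two adjacent odd chords: chords `{u,v₀} = {cvtx i, cvtx (i+d)}` and
`{x,y} = {cvtx (i+d+1), cvtx (i+n-1)}` whose endpoints appear in cyclic order
`u, v₀, x, y` with `{v₀,x}` and `{y,u}` edges of `C`, both chords odd. -/
def HasTwoAdjOddChords {G : SimpleGraph V} {v : V} (C : G.Walk v v) : Prop :=
  ∃ i d : ℕ, 1 ≤ d ∧ d + 3 ≤ C.length ∧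
    IsChordAt C i (i + d) ∧ (Odd d ∨ Odd (C.length - d)) ∧
    IsChordAt C (i + d + 1) (i + C.length - 1) ∧
    (Odd (C.length - d - 2) ∨ Odd (d + 2))

/-! In a complete multipartite graph non-adjacency means lying in the same part, an equivalence
relation. Without odd chords, two vertices of `C` at odd distance at least 3 along both arcs are
non-adjacent, hence in the same part. If `x, y` are at even distance `d` with `2 ≤ d ≤ |C| - 2`,
then `y` has a cycle neighbour `z` at odd distance at least 3 from `x` along both arcs (at distance
`d - 1`, or `3` when `d = 2`, which needs `|C| ≥ 6`). So `z` is in the part of `x` and adjacent to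
`y`, whence `y` is not in that part: `x` and `y` are adjacent. -/

open SimpleGraph

namespace SimpleGraph

lemma isCompleteMultipartite_of_adj_iff_ne {α ι : Type*} {G : SimpleGraph α} (f : α → ι)
    (h : ∀ u w, G.Adj u w ↔ f u ≠ f w) : G.IsCompleteMultipartite :=
  ⟨fun a b c hab hbc => by
    simp only [h, ne_eq, not_not] at hab hbc ⊢
    exact hab.trans hbc⟩

lemma IsCompleteMultipartite.adj_of_not_adj_of_adj {α : Type*} {G : SimpleGraph α}
    (hG : G.IsCompleteMultipartite) {u v w : α} (huv : ¬G.Adj u v) (hvw : G.Adj v w) :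
    G.Adj u w := by
  by_contra huw
  exact hG.trans v u w (fun h => huv h.symm) huw hvw

end SimpleGraph

section CycleVertices

variable {V : Type*} {G : SimpleGraph V} {v : V} {C : G.Walk v v}

lemma cvtx_eq_getVert (C : G.Walk v v) (i : ℕ) : cvtx C i = C.getVert (i % C.length + 1) := by
  rw [cvtx, Walk.getVert_eq_getD_support, ← C.cons_tail_support, List.getD_cons_succ,
    C.cons_tail_support]

lemma cvtx_congr (C : G.Walk v v) {a b : ℕ} (h : a ≡ b [MOD C.length]) :
    cvtx C a = cvtx C b := by
  rw [cvtx, cvtx, h]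

lemma cvtx_eq_getVert_succ_mod (hpos : 0 < C.length) (i : ℕ) :
    cvtx C i = C.getVert ((i + 1) % C.length) := by
  rw [cvtx_eq_getVert, ← Nat.mod_add_mod]
  have hi : i % C.length + 1 ≤ C.length := Nat.mod_lt i hpos
  rcases hi.lt_or_eq with h | h
  · rw [Nat.mod_eq_of_lt h]
  · rw [h, Nat.mod_self, C.getVert_length, C.getVert_zero]

lemma adj_cvtx_succ (hpos : 0 < C.length) (i : ℕ) : G.Adj (cvtx C i) (cvtx C (i + 1)) := by
  rw [cvtx_eq_getVert_succ_mod hpos, cvtx_eq_getVert]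
  exact C.adj_getVert_succ (Nat.mod_lt _ hpos)

lemma cvtx_eq_cvtx_iff (hC : C.IsCycle) {a b : ℕ} :
    cvtx C a = cvtx C b ↔ a ≡ b [MOD C.length] := by
  refine ⟨fun h => ?_, cvtx_congr C⟩
  have hpos : 0 < C.length := by have := hC.three_le_length; omega
  rw [cvtx_eq_getVert, cvtx_eq_getVert] at h
  exact Nat.succ_injective <|
    hC.getVert_injOn ⟨by omega, Nat.mod_lt a hpos⟩ ⟨by omega, Nat.mod_lt b hpos⟩ h

lemma exists_eq_cvtx_of_mem_edges (hpos : 0 < C.length) {e : Sym2 V} (he : e ∈ C.edges) :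
    ∃ k, e = s(cvtx C k, cvtx C (k + 1)) := by
  obtain ⟨k, hk, rfl⟩ := List.getElem_of_mem he
  have hk' : k < C.length := by simpa using hk
  refine ⟨k + C.length - 1, ?_⟩
  rw [Walk.getElem_edges, cvtx_eq_getVert_succ_mod hpos, Nat.sub_add_cancel (by omega),
    Nat.add_mod_right, Nat.mod_eq_of_lt hk', cvtx_eq_getVert,
    Nat.add_mod_right, Nat.mod_eq_of_lt hk']

lemma cvtx_add_notMem_edges (hC : C.IsCycle) (a : ℕ) {d : ℕ} (hd : 1 < d)
    (hdn : d + 1 < C.length) :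
    s(cvtx C a, cvtx C (a + d)) ∉ C.edges := by
  intro he
  obtain ⟨k, hk⟩ := exists_eq_cvtx_of_mem_edges (by omega) he
  simp only [Sym2.eq_iff, cvtx_eq_cvtx_iff hC] at hk
  rcases hk with ⟨h₁, h₂⟩ | ⟨h₁, h₂⟩
  · have hd1 : d ≡ 1 [MOD C.length] :=
      Nat.ModEq.add_left_cancel' a (h₂.trans (h₁.symm.add_right 1))
    rw [Nat.ModEq, Nat.mod_eq_of_lt (by omega), Nat.mod_eq_of_lt (by omega)] at hd1
    omega
  · have hd1 : d + 1 ≡ 0 [MOD C.length] :=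
      Nat.ModEq.add_left_cancel' a (by rw [← add_assoc]; exact (h₂.add_right 1).trans h₁.symm)
    rw [Nat.ModEq, Nat.mod_eq_of_lt (by omega), Nat.zero_mod] at hd1
    omega

lemma isChordAt_of_adj (hC : C.IsCycle) {i j : ℕ} (hij : i + 1 < j) (hji : j + 1 < i + C.length)
    (hadj : G.Adj (cvtx C i) (cvtx C j)) : IsChordAt C i j := by
  have h := cvtx_add_notMem_edges hC i (d := j - i) (by omega) (by omega)
  rw [Nat.add_sub_cancel' (by omega)] at h
  exact ⟨hadj, h⟩

lemma not_adj_cvtx_add_of_odd (hC : C.IsCycle) (heven : Even C.length) (hno : ¬HasOddChord C)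
    (a : ℕ) {d : ℕ} (hd : Odd d) (hd1 : 1 < d) (hdn : d + 1 < C.length) :
    ¬G.Adj (cvtx C a) (cvtx C (a + d)) := by
  intro hadj
  have hpos : 0 < C.length := by omega
  obtain ⟨i, hi, hadj⟩ : ∃ i < C.length, G.Adj (cvtx C i) (cvtx C (i + d)) :=
    ⟨a % C.length, Nat.mod_lt _ hpos, by
      rwa [cvtx_congr C (Nat.mod_modEq a _), cvtx_congr C ((Nat.mod_modEq a _).add_right d)]⟩
  apply hno
  rcases lt_or_ge (i + d) C.length with h | h
  · exact ⟨i, i + d, by omega, h, by rwa [Nat.add_sub_cancel_left],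
      isChordAt_of_adj hC (by omega) (by omega) hadj⟩
  · -- the chord wraps around: read it from position `i + d - C.length < i`
    have hwrap : cvtx C (i + d - C.length) = cvtx C (i + d) := by
      apply cvtx_congr
      conv_rhs => rw [← Nat.sub_add_cancel h]
      exact Nat.add_modEq_right.symm
    refine ⟨i + d - C.length, i, by omega, hi, ?_, isChordAt_of_adj hC (by omega) (by omega)
      (by rw [hwrap]; exact hadj.symm)⟩
    rw [show i - (i + d - C.length) = C.length - d by omega]
    exact Nat.Even.sub_odd (by omega) heven hd

theorem adj_cvtx_add_of_even (hG : G.IsCompleteMultipartite) (hC : C.IsCycle)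
    (heven : Even C.length) (hlen : 6 ≤ C.length) (hno : ¬HasOddChord C) (a : ℕ) {d : ℕ}
    (hd : Even d) (hd0 : 0 < d) (hdn : d < C.length) : G.Adj (cvtx C a) (cvtx C (a + d)) := by
  have hpos : 0 < C.length := by omega
  obtain ⟨e, he, he1, hen, hadj⟩ : ∃ e, Odd e ∧ 1 < e ∧ e + 1 < C.length ∧
      G.Adj (cvtx C (a + e)) (cvtx C (a + d)) := by
    obtain ⟨m, rfl⟩ := hd
    rcases eq_or_ne m 1 with rfl | hm
    · exact ⟨3, by decide, by omega, by omega, (adj_cvtx_succ hpos (a + 2)).symm⟩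
    · refine ⟨m + m - 1, ⟨m - 1, by omega⟩, by omega, by omega, ?_⟩
      have h := adj_cvtx_succ hpos (a + (m + m - 1))
      rwa [show a + (m + m - 1) + 1 = a + (m + m) by omega] at h
  exact hG.adj_of_not_adj_of_adj (not_adj_cvtx_add_of_odd hC heven hno a he he1 hen) hadj

end CycleVertices

/-- in a complete `r`-partite graph, an even cycle of length at
least 6 with no odd chord has all even chords: any two vertices of `C` at even
distance along `C` are adjacent in `G`. -/
theorem stmt_14 (G : SimpleGraph V) (r : ℕ) (part : V → Fin r)
    (hpart : ∀ u w : V, G.Adj u w ↔ part u ≠ part w)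
    (v : V) (C : G.Walk v v) (hC : C.IsCycle)
    (heven : Even C.length) (hlen : 6 ≤ C.length)
    (hno : ¬ HasOddChord C) :
    ∀ i j : ℕ, i < j → j < C.length → Even (j - i) → G.Adj (cvtx C i) (cvtx C j) := by
  intro i j hij hj hev
  have h := adj_cvtx_add_of_even (isCompleteMultipartite_of_adj_iff_ne part hpart) hC heven hlen
    hno i hev (by omega) (by omega)
  rwa [Nat.add_sub_cancel' hij.le] at h
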